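/- arXiv:1712.00806 — 2 statements merged into one kernel-verified Lean document; each statement's English description precedes it below -/
import Mathlib

section
/- Let (H, A, ⟨·,·⟩_A) and (H, B, ⟨·,·⟩_B) be Hilbert C*-module structures on the same space H, φ : A → B a *-homomorphism, and θ : H → H a surjective map with ⟨θx, θy⟩_B = φ(⟨x,y⟩_A) for all x, y ∈ H. If {Λ_i}_{i∈I} is a *-g-frame for (H, A) with bounds A₀, B₀ and θΛ_i = Λ_iθ for each i, then {Λ_i} is a *-g-frame for (H, B) with bounds φ(A₀) and φ(B₀), i.e. φ(A₀)⟨y,y⟩_B φ(A₀)* ≤ Σ_i ⟨Λ_i y, Λ_i y⟩_B ≤ φ(B₀)⟨y,y⟩_B φ(B₀)* for all y ∈ H. -/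
open scoped CStarAlgebra

/-- Let `H` carry two Hilbert C*-module structures, over `A` (inner product `innA`) and over
`B` (inner product `innB`), let `φ : A → B` be a *-homomorphism, and `θ : H → H` a surjective
map with `⟨θx, θy⟩_B = φ(⟨x, y⟩_A)`.  If `{Λ i}` is a *-g-frame for `(H, A)` with bounds
`A₀`, `B₀`, and `θ ∘ Λ i = Λ i ∘ θ` for all `i`, then `{Λ i}` is a *-g-frame for `(H, B)`
with bounds `φ(A₀)` and `φ(B₀)`. -/
theorem star_g_frame_of_hom
    {A B H : Type*} {ι : Type*}
    [NonUnitalCStarAlgebra A] [PartialOrder A] [StarOrderedRing A]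
    [NonUnitalCStarAlgebra B] [PartialOrder B] [StarOrderedRing B]
    [NormedAddCommGroup H] [NormedSpace ℂ H]
    -- the `A`-valued and `B`-valued inner products on `H`
    (innA : H → H → A) (innB : H → H → B)
    (innA_star : ∀ x y : H, star (innA x y) = innA y x)
    (innA_nonneg : ∀ x : H, 0 ≤ innA x x)
    (innB_star : ∀ x y : H, star (innB x y) = innB y x)
    (innB_nonneg : ∀ x : H, 0 ≤ innB x x)
    -- the *-homomorphism `φ` and the surjective map `θ` intertwining the inner products
    (φ : A →⋆ₙₐ[ℂ] B) (θ : H → H) (hθsurj : Function.Surjective θ)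
    (hθ : ∀ x y : H, innB (θ x) (θ y) = φ (innA x y))
    -- `{Λ i}` is a *-g-frame for `(H, A)` with bounds `A₀`, `B₀`, commuting with `θ`
    (Λ : ι → H →ₗ[ℂ] H) (A₀ B₀ : A) (hA₀ : A₀ ≠ 0) (hB₀ : B₀ ≠ 0)
    (hcomm : ∀ (i : ι) (x : H), θ (Λ i x) = Λ i (θ x))
    (hΛsum : ∀ x : H, Summable fun i => innA (Λ i x) (Λ i x))
    (hΛ : ∀ x : H,
      A₀ * innA x x * star A₀ ≤ ∑' i, innA (Λ i x) (Λ i x) ∧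
      ∑' i, innA (Λ i x) (Λ i x) ≤ B₀ * innA x x * star B₀) :
    ∀ y : H,
      φ A₀ * innB y y * star (φ A₀) ≤ ∑' i, innB (Λ i y) (Λ i y) ∧
      ∑' i, innB (Λ i y) (Λ i y) ≤ φ B₀ * innB y y * star (φ B₀) := by
  intro y
  obtain ⟨x, rfl⟩ := hθsurj y
  have hcont : Continuous φ := map_continuous φ
  have hsum : ∀ i, innB (Λ i (θ x)) (Λ i (θ x)) = φ (innA (Λ i x) (Λ i x)) := fun i => by
    rw [← hcomm, hθ]
  have htsum : ∑' i, innB (Λ i (θ x)) (Λ i (θ x)) = φ (∑' i, innA (Λ i x) (Λ i x)) := by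
    simp_rw [hsum]
    exact ((hΛsum x).hasSum.map φ hcont).tsum_eq
  rw [htsum, hθ]
  constructor
  · have h := OrderHomClass.mono φ (hΛ x).1
    simpa [map_mul, map_star] using h
  · have h := OrderHomClass.mono φ (hΛ x).2
    simpa [map_mul, map_star] using h
end

section
/- If {Λ_i}_{i∈I} is a *-g-Parseval frame for a Hilbert A-module H (bounds A₀ = B₀ = 1) and {Γ_j}_{j∈J} is a *-g-Parseval frame for a Hilbert B-module K, then {Λ_i ⊗ Γ_j}_{(i,j)∈I×J} is a *-g-Parseval frame for H ⊗ K: Σ_{i,j} ⟨(Λ_i ⊗ Γ_j)z, (Λ_i ⊗ Γ_j)z⟩ = ⟨z,z⟩ for all z ∈ H ⊗ K. -/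
/-!
On an elementary tensor the frame sum is `∑ ⟪Λᵢ x, Λᵢ x⟫ ⊗ ⟪Γⱼ y, Γⱼ y⟫`, a tensor product of two
positive families with sums `⟪x, x⟫` and `⟪y, y⟫`. No continuity of `⊗` is assumed, but on positive
elements it is monotone and satisfies `‖a ⊗ b‖² ≤ ‖a‖ ‖b‖ ‖a' ⊗ b'‖` for `a ≤ a'`, `b ≤ b'`; so the
rectangular partial sums converge, and a positive family whose partial sums stay below `s` and
approach it has sum `s`. Polarization in each factor gives the off-diagonal identities, and
sesquilinearity extends them to the span of elementary tensors. For a general `z`, the defect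
`⟪z, z⟫ - ∑_P ⟪Θ z, Θ z⟫` is a positive sesquilinear form (by density), so the parallelogram law
bounds it at `z` by twice its values at a nearby `z₀` of the span and at `z - z₀`.
-/

/-- The Hilbert C⋆-module class as it stood in Mathlib of December 2024 (a *right* `A`-module,
`⟪x, y <• a⟫ = ⟪x, y⟫ * a`); Mathlib's `CStarModule` now describes left modules. -/
class OldCStarModule (A E : Type*) [NonUnitalSemiring A] [StarRing A] [Module ℂ A]
    [AddCommGroup E] [Module ℂ E] [PartialOrder A] [SMul Aᵐᵒᵖ E] [Norm A] [Norm E]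
    extends Inner A E where
  inner_add_right {x} {y} {z} : inner x (y + z) = inner x y + inner x z
  inner_self_nonneg {x} : 0 ≤ inner x x
  inner_self {x} : inner x x = 0 ↔ x = 0
  inner_op_smul_right {a : A} {x y : E} : inner x (MulOpposite.op a • y) = inner x y * a
  inner_smul_right_complex {z : ℂ} {x} {y} : inner x (z • y) = z • inner x y
  star_inner x y : star (inner x y) = inner y x
  norm_eq_sqrt_norm_inner_self x : ‖x‖ = Real.sqrt ‖inner x x‖

open Filter Topology
open scoped InnerProductSpace

namespace OldCStarModule

section Algebra

variable {A E : Type*} [NonUnitalCStarAlgebra A] [PartialOrder A]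
  [NormedAddCommGroup E] [NormedSpace ℂ E] [SMul Aᵐᵒᵖ E] [OldCStarModule A E]

lemma inner_add_left {x y z : E} : ⟪x + y, z⟫_A = ⟪x, z⟫_A + ⟪y, z⟫_A := by
  rw [← star_inner z, inner_add_right, star_add, star_inner, star_inner]

lemma inner_smul_left_complex {c : ℂ} {x y : E} : ⟪c • x, y⟫_A = star c • ⟪x, y⟫_A := by
  rw [← star_inner y, inner_smul_right_complex, star_smul, star_inner]

noncomputable def innerₛₗ : E →ₗ⋆[ℂ] E →ₗ[ℂ] A where
  toFun x :=
    { toFun := fun y => ⟪x, y⟫_A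
      map_add' := fun _ _ => inner_add_right
      map_smul' := fun _ _ => inner_smul_right_complex }
  map_add' _ _ := LinearMap.ext fun _ => inner_add_left
  map_smul' _ _ := LinearMap.ext fun _ => inner_smul_left_complex

lemma innerₛₗ_apply {x y : E} : innerₛₗ x y = ⟪x, y⟫_A := rfl

lemma inner_zero_left {x : E} : ⟪0, x⟫_A = 0 := by simp [← innerₛₗ_apply]
lemma inner_zero_right {x : E} : ⟪x, 0⟫_A = 0 := by simp [← innerₛₗ_apply]
lemma inner_sub_left {x y z : E} : ⟪x - y, z⟫_A = ⟪x, z⟫_A - ⟪y, z⟫_A := by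
  simp [← innerₛₗ_apply]
lemma inner_sub_right {x y z : E} : ⟪x, y - z⟫_A = ⟪x, y⟫_A - ⟪x, z⟫_A := by
  simp [← innerₛₗ_apply]

lemma inner_smul_left_real {r : ℝ} {x y : E} : ⟪r • x, y⟫_A = r • ⟪x, y⟫_A := by
  simpa using inner_smul_left_complex (A := A) (c := r) (x := x) (y := y)

lemma inner_smul_right_real {r : ℝ} {x y : E} : ⟪x, r • y⟫_A = r • ⟪x, y⟫_A := by
  simpa using inner_smul_right_complex (A := A) (z := r) (x := x) (y := y)

lemma inner_op_smul_left {a : A} {x y : E} :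
    ⟪MulOpposite.op a • x, y⟫_A = star a * ⟪x, y⟫_A := by
  rw [← star_inner y, inner_op_smul_right, star_mul, star_inner]

lemma norm_sq_eq {x : E} : ‖x‖ ^ 2 = ‖⟪x, x⟫_A‖ := by
  rw [norm_eq_sqrt_norm_inner_self (A := A) x, Real.sq_sqrt (norm_nonneg _)]

end Algebra

section Norm

variable {A E : Type*} [NonUnitalCStarAlgebra A] [PartialOrder A] [StarOrderedRing A]
  [NormedAddCommGroup E] [NormedSpace ℂ E] [SMul Aᵐᵒᵖ E] [OldCStarModule A E]

lemma inner_mul_inner_swap_le {x y : E} : ⟪y, x⟫_A * ⟪x, y⟫_A ≤ ‖x‖ ^ 2 • ⟪y, y⟫_A := by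
  rcases eq_or_ne x 0 with rfl | hx
  · simp [inner_zero_left, inner_zero_right]
  set a := ⟪x, y⟫_A
  set v := MulOpposite.op a • x - ‖x‖ ^ 2 • y
  have expand : ⟪v, v⟫_A = ⟪y, x⟫_A * ⟪x, x⟫_A * a - ‖x‖ ^ 2 • (⟪y, x⟫_A * a)
      - ‖x‖ ^ 2 • (⟪y, x⟫_A * a) + ‖x‖ ^ 2 • (‖x‖ ^ 2 • ⟪y, y⟫_A) := by
    simp only [v, a, inner_sub_left, inner_sub_right, inner_op_smul_left, inner_op_smul_right,
      inner_smul_left_real, inner_smul_right_real, star_inner, smul_mul_assoc, mul_assoc,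
      sub_mul, smul_sub]
    abel
  have conj_le : ⟪y, x⟫_A * ⟪x, x⟫_A * a ≤ ‖x‖ ^ 2 • (⟪y, x⟫_A * a) := by
    rw [norm_sq_eq (A := A), ← star_inner x y]
    exact CStarAlgebra.star_left_conjugate_le_norm_smul (star_inner x x)
  have h := add_nonneg (expand ▸ inner_self_nonneg (A := A) (x := v)) (sub_nonneg.2 conj_le)
  rw [← smul_le_smul_iff_of_pos_left (pow_pos (norm_pos_iff.2 hx) 2), ← sub_nonneg]
  convert h using 1
  abel

lemma norm_inner_le {x y : E} : ‖⟪x, y⟫_A‖ ≤ ‖x‖ * ‖y‖ := by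
  refine le_of_sq_le_sq ?_ (by positivity)
  calc ‖⟪x, y⟫_A‖ ^ 2 = ‖⟪y, x⟫_A * ⟪x, y⟫_A‖ := by
        rw [← star_inner x y, CStarRing.norm_star_mul_self, sq]
    _ ≤ ‖‖x‖ ^ 2 • ⟪y, y⟫_A‖ := by
        refine CStarAlgebra.norm_le_norm_of_nonneg_of_le ?_ inner_mul_inner_swap_le
        rw [← star_inner x y]
        exact star_mul_self_nonneg _
    _ = (‖x‖ * ‖y‖) ^ 2 := by
        rw [norm_smul, Real.norm_of_nonneg (by positivity), ← norm_sq_eq, mul_pow]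

noncomputable def innerSL : E →L⋆[ℂ] E →L[ℂ] A :=
  LinearMap.mkContinuous₂ innerₛₗ 1 fun x y => by
    simpa [innerₛₗ_apply] using norm_inner_le

lemma continuous_inner {X : Type*} [TopologicalSpace X] {f g : X → E}
    (hf : Continuous f) (hg : Continuous g) : Continuous fun t => ⟪f t, g t⟫_A :=
  show Continuous fun t => innerSL (f t) (g t) by fun_prop

end Norm

end OldCStarModule

lemma mul_self_le_norm_smul_of_nonneg {A : Type*} [NonUnitalCStarAlgebra A] [PartialOrder A]
    [StarOrderedRing A] {a : A} (ha : 0 ≤ a) : a * a ≤ ‖a‖ • a := by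
  set s := CFC.sqrt a
  have hss : s * s = a := CFC.sqrt_mul_sqrt_self a ha
  have hstar : star s = s := (CFC.sqrt_nonneg a).star_eq
  calc a * a = star s * a * s := by rw [hstar, ← hss]; noncomm_ring
    _ ≤ ‖a‖ • (star s * s) := CStarAlgebra.star_left_conjugate_le_norm_smul (.of_nonneg ha)
    _ = ‖a‖ • a := by rw [hstar, hss]

lemma hasSum_of_sum_le_of_mem_closure {ι A : Type*} [NonUnitalCStarAlgebra A] [PartialOrder A]
    [StarOrderedRing A] {f : ι → A} {a : A} (hf : ∀ i, 0 ≤ f i)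
    (hle : ∀ P : Finset ι, ∑ i ∈ P, f i ≤ a)
    (ha : a ∈ closure (Set.range fun P : Finset ι => ∑ i ∈ P, f i)) : HasSum f a := by
  classical
  refine (Metric.tendsto_atTop (u := fun P : Finset ι => ∑ i ∈ P, f i)).2 fun ε hε => ?_
  obtain ⟨_, ⟨P₀, rfl⟩, hP₀⟩ := Metric.mem_closure_iff.1 ha ε hε
  refine ⟨P₀, fun P hP => ?_⟩
  rw [dist_eq_norm] at hP₀
  rw [dist_eq_norm, norm_sub_rev]
  have hmono : ∑ i ∈ P₀, f i ≤ ∑ i ∈ P, f i :=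
    Finset.sum_le_sum_of_subset_of_nonneg hP fun i _ _ => hf i
  calc ‖a - ∑ i ∈ P, f i‖ ≤ ‖a - ∑ i ∈ P₀, f i‖ :=
        CStarAlgebra.norm_le_norm_of_nonneg_of_le (sub_nonneg.2 (hle P)) (sub_le_sub_left hmono a)
    _ < ε := hP₀

structure IsStarMulBilinear {A B C : Type*} [Mul A] [Star A] [AddCommMonoid A] [Module ℂ A]
    [Mul B] [Star B] [AddCommMonoid B] [Module ℂ B] [Mul C] [Star C] [AddCommMonoid C]
    [Module ℂ C] (t : A →ₗ[ℂ] B →ₗ[ℂ] C) : Prop where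
  map_mul : ∀ (a a' : A) (b b' : B), t a b * t a' b' = t (a * a') (b * b')
  map_star : ∀ (a : A) (b : B), star (t a b) = t (star a) (star b)

namespace IsStarMulBilinear

variable {A B C : Type*} [NonUnitalCStarAlgebra A] [PartialOrder A] [StarOrderedRing A]
  [NonUnitalCStarAlgebra B] [PartialOrder B] [StarOrderedRing B]
  [NonUnitalCStarAlgebra C] [PartialOrder C] [StarOrderedRing C]
  {t : A →ₗ[ℂ] B →ₗ[ℂ] C} {a a' : A} {b b' : B}

lemma map_nonneg (ht : IsStarMulBilinear t) (ha : 0 ≤ a) (hb : 0 ≤ b) : 0 ≤ t a b := by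
  have hsqrt : t a b = star (t (CFC.sqrt a) (CFC.sqrt b)) * t (CFC.sqrt a) (CFC.sqrt b) := by
    rw [ht.map_star, (CFC.sqrt_nonneg a).star_eq, (CFC.sqrt_nonneg b).star_eq, ht.map_mul,
      CFC.sqrt_mul_sqrt_self a ha, CFC.sqrt_mul_sqrt_self b hb]
  exact hsqrt ▸ star_mul_self_nonneg _

lemma map_le_map (ht : IsStarMulBilinear t) (ha : 0 ≤ a) (haa' : a ≤ a') (hb : 0 ≤ b)
    (hbb' : b ≤ b') : t a b ≤ t a' b' := by
  have hsplit : t a' b' - t a b = t (a' - a) b + t a' (b' - b) := by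
    simp only [map_sub, LinearMap.sub_apply]
    abel
  rw [← sub_nonneg, hsplit]
  exact add_nonneg (ht.map_nonneg (sub_nonneg.2 haa') hb)
    (ht.map_nonneg (ha.trans haa') (sub_nonneg.2 hbb'))

lemma norm_map_sq_le (ht : IsStarMulBilinear t) (ha : 0 ≤ a) (haa' : a ≤ a') (hb : 0 ≤ b)
    (hbb' : b ≤ b') : ‖t a b‖ ^ 2 ≤ ‖a‖ * ‖b‖ * ‖t a' b'‖ := by
  have haa : 0 ≤ a * a := (ha.star_eq ▸ star_mul_self_nonneg a :)
  have hbb : 0 ≤ b * b := (hb.star_eq ▸ star_mul_self_nonneg b :)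
  have hle : t (a * a) (b * b) ≤ (‖a‖ * ‖b‖) • t a' b' := by
    calc t (a * a) (b * b) ≤ t (‖a‖ • a') (‖b‖ • b') :=
          ht.map_le_map haa ((mul_self_le_norm_smul_of_nonneg ha).trans (by gcongr)) hbb
            ((mul_self_le_norm_smul_of_nonneg hb).trans (by gcongr))
      _ = (‖a‖ * ‖b‖) • t a' b' := by
          simp only [LinearMap.map_smul_of_tower, LinearMap.smul_apply, smul_smul]
  calc ‖t a b‖ ^ 2 = ‖t (a * a) (b * b)‖ := by
        rw [sq, ← CStarRing.norm_star_mul_self, (ht.map_nonneg ha hb).star_eq, ht.map_mul]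
    _ ≤ ‖(‖a‖ * ‖b‖) • t a' b'‖ :=
        CStarAlgebra.norm_le_norm_of_nonneg_of_le (ht.map_nonneg haa hbb) hle
    _ = ‖a‖ * ‖b‖ * ‖t a' b'‖ := by
        rw [norm_smul, Real.norm_of_nonneg (by positivity)]

lemma tendsto_map_zero (ht : IsStarMulBilinear t) {α : Type*} {l : Filter α} {u : α → A}
    {v : α → B} (hu : ∀ i, 0 ≤ u i ∧ u i ≤ a) (hv : ∀ i, 0 ≤ v i ∧ v i ≤ b)
    (huv : Tendsto (fun i => ‖u i‖ * ‖v i‖) l (𝓝 0)) :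
    Tendsto (fun i => t (u i) (v i)) l (𝓝 0) := by
  refine squeeze_zero_norm (fun i => ?_)
    (by simpa only [zero_mul, Real.sqrt_zero] using (huv.mul_const ‖t a b‖).sqrt)
  exact (Real.le_sqrt (norm_nonneg _) (by positivity)).2
    (ht.norm_map_sq_le (hu i).1 (hu i).2 (hv i).1 (hv i).2)

lemma tendsto_map (ht : IsStarMulBilinear t) {α : Type*} {l : Filter α} [l.NeBot] {u : α → A}
    {v : α → B} (hu : Tendsto u l (𝓝 a)) (hv : Tendsto v l (𝓝 b))
    (hua : ∀ i, 0 ≤ u i ∧ u i ≤ a) (hvb : ∀ i, 0 ≤ v i ∧ v i ≤ b) :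
    Tendsto (fun i => t (u i) (v i)) l (𝓝 (t a b)) := by
  have hb : 0 ≤ b := ge_of_tendsto' hv fun i => (hvb i).1
  have hu' := tendsto_iff_norm_sub_tendsto_zero.1 hu
  have hv' := tendsto_iff_norm_sub_tendsto_zero.1 hv
  have first : Tendsto (fun i => t (a - u i) b) l (𝓝 0) :=
    ht.tendsto_map_zero (a := a) (b := b)
      (fun i => ⟨sub_nonneg.2 (hua i).2, sub_le_self a (hua i).1⟩) (fun _ => ⟨hb, le_rfl⟩)
      (by simpa [norm_sub_rev] using hu'.mul_const ‖b‖)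
  have second : Tendsto (fun i => t (u i) (b - v i)) l (𝓝 0) :=
    ht.tendsto_map_zero (a := a) (b := b) hua
      (fun i => ⟨sub_nonneg.2 (hvb i).2, sub_le_self b (hvb i).1⟩)
      (by simpa [norm_sub_rev] using hu.norm.mul hv')
  refine tendsto_sub_nhds_zero_iff.1 ?_
  convert (first.add second).neg using 2 with i
  · simp only [map_sub, LinearMap.sub_apply]
    abel
  · simp

lemma hasSum_map (ht : IsStarMulBilinear t) {ι κ : Type*} {f : ι → A} {g : κ → B}
    (hf : ∀ i, 0 ≤ f i) (hg : ∀ j, 0 ≤ g j) (hfa : HasSum f a) (hgb : HasSum g b) :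
    HasSum (fun p : ι × κ => t (f p.1) (g p.2)) (t a b) := by
  classical
  have rect (F : Finset ι) (G : Finset κ) :
      ∑ p ∈ F ×ˢ G, t (f p.1) (g p.2) = t (∑ i ∈ F, f i) (∑ j ∈ G, g j) := by
    simp only [Finset.sum_product, map_sum, LinearMap.coe_sum, Finset.sum_apply]
    exact Finset.sum_comm
  have partial_f (F : Finset ι) : 0 ≤ ∑ i ∈ F, f i ∧ ∑ i ∈ F, f i ≤ a :=
    ⟨Finset.sum_nonneg fun i _ => hf i, sum_le_hasSum F (fun i _ => hf i) hfa⟩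
  have partial_g (G : Finset κ) : 0 ≤ ∑ j ∈ G, g j ∧ ∑ j ∈ G, g j ≤ b :=
    ⟨Finset.sum_nonneg fun j _ => hg j, sum_le_hasSum G (fun j _ => hg j) hgb⟩
  refine hasSum_of_sum_le_of_mem_closure (fun p => ht.map_nonneg (hf p.1) (hg p.2))
    (fun P => ?_) ?_
  · have hP : P ⊆ P.image Prod.fst ×ˢ P.image Prod.snd := fun p hp =>
      Finset.mem_product.2 ⟨Finset.mem_image_of_mem _ hp, Finset.mem_image_of_mem _ hp⟩
    calc ∑ p ∈ P, t (f p.1) (g p.2)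
        ≤ ∑ p ∈ P.image Prod.fst ×ˢ P.image Prod.snd, t (f p.1) (g p.2) :=
          Finset.sum_le_sum_of_subset_of_nonneg hP fun p _ _ => ht.map_nonneg (hf p.1) (hg p.2)
      _ ≤ t a b := by
          rw [rect]
          exact ht.map_le_map (partial_f _).1 (partial_f _).2 (partial_g _).1 (partial_g _).2
  · have hlim : Tendsto (fun FG : Finset ι × Finset κ => t (∑ i ∈ FG.1, f i) (∑ j ∈ FG.2, g j))
        atTop (𝓝 (t a b)) := by
      rw [← prod_atTop_atTop_eq]
      exact ht.tendsto_map (hfa.comp tendsto_fst) (hgb.comp tendsto_snd)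
        (fun FG => partial_f FG.1) (fun FG => partial_g FG.2)
    exact mem_closure_of_tendsto hlim (Eventually.of_forall fun FG => ⟨FG.1 ×ˢ FG.2, rect _ _⟩)

end IsStarMulBilinear

lemma LinearMap.apply_add_add_le {E M : Type*} [AddCommGroup E] [Module ℂ E] [AddCommGroup M]
    [Module ℂ M] [PartialOrder M] [IsOrderedAddMonoid M] (Q : E →ₗ⋆[ℂ] E →ₗ[ℂ] M) {x y : E}
    (h : 0 ≤ Q (x - y) (x - y)) : Q (x + y) (x + y) ≤ 2 • Q x x + 2 • Q y y := by
  have parallelogram : Q (x + y) (x + y) + Q (x - y) (x - y) = 2 • Q x x + 2 • Q y y := by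
    simp only [map_add, map_sub, LinearMap.add_apply, LinearMap.sub_apply]
    abel
  exact parallelogram ▸ le_add_of_nonneg_right h

namespace OldCStarModule

section Frames

variable {A E F : Type*} [NonUnitalCStarAlgebra A] [PartialOrder A]
  [NormedAddCommGroup E] [NormedSpace ℂ E] [SMul Aᵐᵒᵖ E] [OldCStarModule A E]
  [NormedAddCommGroup F] [NormedSpace ℂ F] [SMul Aᵐᵒᵖ F] [OldCStarModule A F]
  {ι 𝓕 : Type*} [FunLike 𝓕 E F] [LinearMapClass 𝓕 ℂ E F]

lemma hasSum_inner_self_of_tsum_eq {T : ι → 𝓕} {x : E}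
    (h : ∑' i, ⟪T i x, T i x⟫_A = ⟪x, x⟫_A) : HasSum (fun i => ⟪T i x, T i x⟫_A) ⟪x, x⟫_A := by
  by_cases hs : Summable fun i => ⟪T i x, T i x⟫_A
  · exact h ▸ hs.hasSum
  · obtain rfl : x = 0 := inner_self.1 (by rw [← h, tsum_eq_zero_of_not_summable hs])
    simp only [map_zero, inner_zero_left] at hs
    exact absurd summable_zero hs

lemma map_inner_eq_polarization {M : Type*} [AddCommGroup M] [Module ℂ M] (L : A →ₗ[ℂ] M)
    (x y : E) : L ⟪x, y⟫_A = (4 : ℂ)⁻¹ • ∑ k ∈ Finset.range 4,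
      Complex.I ^ k • L ⟪Complex.I ^ k • x + y, Complex.I ^ k • x + y⟫_A := by
  have expand (c : ℂ) : ⟪c • x + y, c • x + y⟫_A = (star c * c) • ⟪x, x⟫_A
      + star c • ⟪x, y⟫_A + c • ⟪y, x⟫_A + ⟪y, y⟫_A := by
    simp only [inner_add_left, inner_add_right, inner_smul_left_complex,
      inner_smul_right_complex]
    module
  simp only [expand, Finset.sum_range_succ, Finset.sum_range_zero, map_add, map_smul]
  match_scalars <;> simp [pow_succ, Complex.I_mul_I]
  norm_num

lemma hasSum_polarization {M : Type*} [AddCommGroup M] [Module ℂ M] [TopologicalSpace M]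
    [ContinuousAdd M] [ContinuousConstSMul ℂ M] (T : ι → 𝓕) (L : ι → A →ₗ[ℂ] M)
    (L₀ : A →ₗ[ℂ] M) (h : ∀ x, HasSum (fun i => L i ⟪T i x, T i x⟫_A) (L₀ ⟪x, x⟫_A))
    (x y : E) : HasSum (fun i => L i ⟪T i x, T i y⟫_A) (L₀ ⟪x, y⟫_A) := by
  have hpol : (fun i => L i ⟪T i x, T i y⟫_A) = fun i => (4 : ℂ)⁻¹ • ∑ k ∈ Finset.range 4,
      Complex.I ^ k • L i ⟪T i (Complex.I ^ k • x + y), T i (Complex.I ^ k • x + y)⟫_A := by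
    ext i
    rw [map_inner_eq_polarization (L i)]
    simp only [map_add, map_smul]
  rw [hpol, map_inner_eq_polarization L₀]
  exact (hasSum_sum fun k _ => (h _).const_smul _).const_smul _

lemma hasSum_inner_of_mem_span {T : ι → 𝓕} {s : Set E}
    (h : ∀ z ∈ s, ∀ w ∈ s, HasSum (fun i => ⟪T i z, T i w⟫_A) ⟪z, w⟫_A) {z w : E}
    (hz : z ∈ Submodule.span ℂ s) (hw : w ∈ Submodule.span ℂ s) :
    HasSum (fun i => ⟪T i z, T i w⟫_A) ⟪z, w⟫_A := by
  induction hz, hw using Submodule.span_induction₂ with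
  | mem_mem z w hz hw => exact h z hz w hw
  | zero_left => simpa only [map_zero, inner_zero_left] using hasSum_zero
  | zero_right => simpa only [map_zero, inner_zero_right] using hasSum_zero
  | add_left u v w _ _ _ hu hv => simpa only [map_add, inner_add_left] using hu.add hv
  | add_right u v w _ _ _ hv hw => simpa only [map_add, inner_add_right] using hv.add hw
  | smul_left c u w _ _ h => simpa only [map_smul, inner_smul_left_complex] using h.const_smul _
  | smul_right c u w _ _ h => simpa only [map_smul, inner_smul_right_complex] using h.const_smul c

section Dense

variable {T : ι → E →L[ℂ] F}

variable (A) in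
noncomputable def frameDefect (T : ι → E →L[ℂ] F) (P : Finset ι) : E →ₗ⋆[ℂ] E →ₗ[ℂ] A :=
  innerₛₗ - ∑ i ∈ P, (innerₛₗ.comp (T i : E →ₗ[ℂ] F)).compl₂ (T i : E →ₗ[ℂ] F)

lemma frameDefect_apply (P : Finset ι) (z w : E) :
    frameDefect A T P z w = ⟪z, w⟫_A - ∑ i ∈ P, ⟪T i z, T i w⟫_A := by
  simp [frameDefect, innerₛₗ_apply]

variable [StarOrderedRing A]

lemma sum_inner_self_le_of_dense {D : Set E} (hD : Dense D)
    (h : ∀ z ∈ D, HasSum (fun i => ⟪T i z, T i z⟫_A) ⟪z, z⟫_A) (P : Finset ι) (z : E) :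
    ∑ i ∈ P, ⟪T i z, T i z⟫_A ≤ ⟪z, z⟫_A := by
  have hclosed : IsClosed {z | ∑ i ∈ P, ⟪T i z, T i z⟫_A ≤ ⟪z, z⟫_A} :=
    isClosed_le
      (continuous_finsetSum _ fun i _ => continuous_inner (T i).continuous (T i).continuous)
      (continuous_inner continuous_id continuous_id)
  have hsub := hclosed.closure_subset_iff.2 fun z hz =>
    sum_le_hasSum P (fun i _ => inner_self_nonneg) (h z hz)
  exact hsub (hD.closure_eq ▸ Set.mem_univ z)

lemma norm_frameDefect_le {P : Finset ι} (hle : ∀ z, ∑ i ∈ P, ⟪T i z, T i z⟫_A ≤ ⟪z, z⟫_A)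
    (z z₀ : E) :
    ‖frameDefect A T P z z‖ ≤ 2 * ‖frameDefect A T P z₀ z₀‖ + 2 * ‖z - z₀‖ ^ 2 := by
  set Q := frameDefect A T P
  have hQ (v : E) : 0 ≤ Q v v := by
    rw [frameDefect_apply]
    exact sub_nonneg.2 (hle v)
  have hQw : Q (z - z₀) (z - z₀) ≤ ⟪z - z₀, z - z₀⟫_A := by
    rw [frameDefect_apply]
    exact sub_le_self _ (Finset.sum_nonneg fun i _ => inner_self_nonneg)
  have hpar : Q z z ≤ 2 • Q z₀ z₀ + 2 • Q (z - z₀) (z - z₀) := by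
    simpa using Q.apply_add_add_le (x := z₀) (y := z - z₀) (hQ _)
  calc ‖Q z z‖ ≤ ‖2 • Q z₀ z₀ + 2 • Q (z - z₀) (z - z₀)‖ :=
        CStarAlgebra.norm_le_norm_of_nonneg_of_le (hQ z) hpar
    _ ≤ 2 * ‖Q z₀ z₀‖ + 2 * ‖Q (z - z₀) (z - z₀)‖ :=
        (norm_add_le _ _).trans (add_le_add (norm_nsmul_le ..) (norm_nsmul_le ..))
    _ ≤ 2 * ‖Q z₀ z₀‖ + 2 * ‖z - z₀‖ ^ 2 := by
        rw [norm_sq_eq (A := A)]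
        gcongr
        exact CStarAlgebra.norm_le_norm_of_nonneg_of_le (hQ _) hQw

lemma hasSum_inner_self_of_dense {D : Set E} (hD : Dense D)
    (h : ∀ z ∈ D, HasSum (fun i => ⟪T i z, T i z⟫_A) ⟪z, z⟫_A) (z : E) :
    HasSum (fun i => ⟪T i z, T i z⟫_A) ⟪z, z⟫_A := by
  have hle := sum_inner_self_le_of_dense hD h
  refine hasSum_of_sum_le_of_mem_closure (fun i => inner_self_nonneg) (hle · z)
    (Metric.mem_closure_iff.2 fun ε hε => ?_)
  obtain ⟨z₀, hz₀, hzz₀⟩ := Metric.mem_closure_iff.1 (hD z) √(ε / 4) (by positivity)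
  obtain ⟨P, hP⟩ :=
    ((h z₀ hz₀).eventually (Metric.ball_mem_nhds _ (by positivity : 0 < ε / 4))).exists
  refine ⟨_, ⟨P, rfl⟩, ?_⟩
  have hw : ‖z - z₀‖ ^ 2 < ε / 4 := (Real.lt_sqrt (norm_nonneg _)).1 (dist_eq_norm z z₀ ▸ hzz₀)
  have hP' : ‖frameDefect A T P z₀ z₀‖ < ε / 4 := by
    rw [frameDefect_apply, ← dist_eq_norm, dist_comm]
    exact hP
  rw [dist_eq_norm, ← frameDefect_apply]
  linarith [norm_frameDefect_le (hle P) z z₀]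

end Dense

end Frames

end OldCStarModule

open OldCStarModule in
theorem tensor_product_star_g_parseval_frame_general
    {A B C H K E : Type*} {ι κ : Type*}
    [NonUnitalCStarAlgebra A] [PartialOrder A] [StarOrderedRing A]
    [NonUnitalCStarAlgebra B] [PartialOrder B] [StarOrderedRing B]
    [NonUnitalCStarAlgebra C] [PartialOrder C] [StarOrderedRing C]
    [NormedAddCommGroup H] [NormedSpace ℂ H] [SMul Aᵐᵒᵖ H] [OldCStarModule A H]
    [NormedAddCommGroup K] [NormedSpace ℂ K] [SMul Bᵐᵒᵖ K] [OldCStarModule B K]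
    [NormedAddCommGroup E] [NormedSpace ℂ E] [SMul Cᵐᵒᵖ E] [OldCStarModule C E]
    -- the spatial tensor product `C = A ⊗ B`
    (tmul : A →ₗ[ℂ] B →ₗ[ℂ] C)
    (tmul_mul : ∀ (a a' : A) (b b' : B), tmul a b * tmul a' b' = tmul (a * a') (b * b'))
    (tmul_star : ∀ (a : A) (b : B), star (tmul a b) = tmul (star a) (star b))
    -- the exterior tensor product `E = H ⊗ K`
    (tmulE : H →ₗ[ℂ] K →ₗ[ℂ] E)
    (tmulE_inner : ∀ (x x' : H) (y y' : K),
      inner (𝕜 := C) (tmulE x y) (tmulE x' y')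
        = tmul (inner (𝕜 := A) x x') (inner (𝕜 := B) y y'))
    (tmulE_dense : Dense (Submodule.span ℂ (Set.range fun p : H × K => tmulE p.1 p.2) : Set E))
    -- `{Λ i}` is a *-g-Parseval frame for `H`
    (Λ : ι → H →L[ℂ] H)
    (hΛ : ∀ x : H, ∑' i, inner (𝕜 := A) (Λ i x) (Λ i x) = inner (𝕜 := A) x x)
    -- `{Γ j}` is a *-g-Parseval frame for `K`
    (Γ : κ → K →L[ℂ] K)
    (hΓ : ∀ y : K, ∑' j, inner (𝕜 := B) (Γ j y) (Γ j y) = inner (𝕜 := B) y y)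
    -- the tensor product operators `Θ i j = Λ i ⊗ Γ j`
    (Θ : ι → κ → E →L[ℂ] E)
    (hΘ : ∀ (i : ι) (j : κ) (x : H) (y : K), Θ i j (tmulE x y) = tmulE (Λ i x) (Γ j y)) :
    ∀ z : E, ∑' p : ι × κ, inner (𝕜 := C) (Θ p.1 p.2 z) (Θ p.1 p.2 z) = inner (𝕜 := C) z z := by
  have htmul : IsStarMulBilinear tmul := ⟨tmul_mul, tmul_star⟩
  have diagonal (x : H) (y : K) : HasSum (fun p : ι × κ =>
      tmul ⟪Λ p.1 x, Λ p.1 x⟫_A ⟪Γ p.2 y, Γ p.2 y⟫_B) (tmul ⟪x, x⟫_A ⟪y, y⟫_B) :=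
    htmul.hasSum_map (f := fun i => ⟪Λ i x, Λ i x⟫_A) (g := fun j => ⟪Γ j y, Γ j y⟫_B)
      (fun _ => inner_self_nonneg) (fun _ => inner_self_nonneg)
      (hasSum_inner_self_of_tsum_eq (hΛ x)) (hasSum_inner_self_of_tsum_eq (hΓ y))
  have elementary (x x' : H) (y y' : K) : HasSum (fun p : ι × κ =>
      tmul ⟪Λ p.1 x, Λ p.1 x'⟫_A ⟪Γ p.2 y, Γ p.2 y'⟫_B) (tmul ⟪x, x'⟫_A ⟪y, y'⟫_B) := by
    refine hasSum_polarization (fun p : ι × κ => Γ p.2) (fun p => tmul ⟪Λ p.1 x, Λ p.1 x'⟫_A)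
      (tmul ⟪x, x'⟫_A) (fun y => ?_) y y'
    simpa only [LinearMap.flip_apply] using hasSum_polarization (fun p : ι × κ => Λ p.1)
      (fun p => tmul.flip ⟪Γ p.2 y, Γ p.2 y⟫_B) (tmul.flip ⟪y, y⟫_B)
      (by simpa only [LinearMap.flip_apply] using (diagonal · y)) x x'
  have onSpan {z w : E} (hz : z ∈ Submodule.span ℂ (Set.range fun p : H × K => tmulE p.1 p.2))
      (hw : w ∈ Submodule.span ℂ (Set.range fun p : H × K => tmulE p.1 p.2)) :
      HasSum (fun p : ι × κ => ⟪Θ p.1 p.2 z, Θ p.1 p.2 w⟫_C) ⟪z, w⟫_C := by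
    refine hasSum_inner_of_mem_span (T := fun p : ι × κ => Θ p.1 p.2) ?_ hz hw
    rintro _ ⟨⟨x, y⟩, rfl⟩ _ ⟨⟨x', y'⟩, rfl⟩
    simpa only [hΘ, tmulE_inner] using elementary x x' y y'
  exact fun z => (hasSum_inner_self_of_dense tmulE_dense (fun z hz => onSpan hz hz) z).tsum_eq

/-- If `{Λ i}` is a *-g-Parseval frame for a Hilbert `A`-module `H` and `{Γ j}` is a
*-g-Parseval frame for a Hilbert `B`-module `K`, then `{Λ i ⊗ Γ j}` (realized by the
operators `Θ i j` on the exterior tensor product `E = H ⊗ K`) is a *-g-Parseval frame for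
the Hilbert `(A ⊗ B)`-module `H ⊗ K`:
`Σ_{i,j} ⟨(Λ i ⊗ Γ j) z, (Λ i ⊗ Γ j) z⟩ = ⟨z, z⟩` for all `z ∈ H ⊗ K`. -/
theorem tensor_product_star_g_parseval_frame
    {A B C H K E : Type*} {ι κ : Type*}
    [NonUnitalCStarAlgebra A] [PartialOrder A] [StarOrderedRing A]
    [NonUnitalCStarAlgebra B] [PartialOrder B] [StarOrderedRing B]
    [NonUnitalCStarAlgebra C] [PartialOrder C] [StarOrderedRing C]
    [NormedAddCommGroup H] [NormedSpace ℂ H] [SMul Aᵐᵒᵖ H] [OldCStarModule A H]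
    [NormedAddCommGroup K] [NormedSpace ℂ K] [SMul Bᵐᵒᵖ K] [OldCStarModule B K]
    [NormedAddCommGroup E] [NormedSpace ℂ E] [SMul Cᵐᵒᵖ E] [OldCStarModule C E]
    -- the spatial tensor product `C = A ⊗ B`
    (tmul : A →ₗ[ℂ] B →ₗ[ℂ] C)
    (tmul_mul : ∀ (a a' : A) (b b' : B), tmul a b * tmul a' b' = tmul (a * a') (b * b'))
    (tmul_star : ∀ (a : A) (b : B), star (tmul a b) = tmul (star a) (star b))
    -- the exterior tensor product `E = H ⊗ K`
    (tmulE : H →ₗ[ℂ] K →ₗ[ℂ] E)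
    (tmulE_inner : ∀ (x x' : H) (y y' : K),
      inner (𝕜 := C) (tmulE x y) (tmulE x' y')
        = tmul (inner (𝕜 := A) x x') (inner (𝕜 := B) y y'))
    (tmulE_dense : Dense (Submodule.span ℂ (Set.range fun p : H × K => tmulE p.1 p.2) : Set E))
    -- `{Λ i}` is a *-g-Parseval frame for `H`
    (Λ : ι → H →L[ℂ] H)
    (hΛsum : ∀ x : H, Summable fun i => inner (𝕜 := A) (Λ i x) (Λ i x))
    (hΛ : ∀ x : H, ∑' i, inner (𝕜 := A) (Λ i x) (Λ i x) = inner (𝕜 := A) x x)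
    -- `{Γ j}` is a *-g-Parseval frame for `K`
    (Γ : κ → K →L[ℂ] K)
    (hΓsum : ∀ y : K, Summable fun j => inner (𝕜 := B) (Γ j y) (Γ j y))
    (hΓ : ∀ y : K, ∑' j, inner (𝕜 := B) (Γ j y) (Γ j y) = inner (𝕜 := B) y y)
    -- the tensor product operators `Θ i j = Λ i ⊗ Γ j`
    (Θ : ι → κ → E →L[ℂ] E)
    (hΘ : ∀ (i : ι) (j : κ) (x : H) (y : K), Θ i j (tmulE x y) = tmulE (Λ i x) (Γ j y)) :
    ∀ z : E, ∑' p : ι × κ, inner (𝕜 := C) (Θ p.1 p.2 z) (Θ p.1 p.2 z) = inner (𝕜 := C) z z :=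
  tensor_product_star_g_parseval_frame_general tmul tmul_mul tmul_star tmulE tmulE_inner tmulE_dense
    Λ hΛ Γ hΓ Θ hΘ
end
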